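/- arXiv:2604.21176 — 3 statements merged into one kernel-verified Lean document; each statement's English description precedes it below -/
import Mathlib

section
/- Composition formula for higher covariant derivatives: for all integers i, j ≥ 0, all v ∈ C∞(⊗^i TM) and w ∈ C∞(⊗^j TM), one has the equality of operators on C∞(E): ∇^i_v ∘ ∇^j_w = ∇^{i+j−•}_{v_{(1)} ⊗ ∇̂^•_{v_{(2)}} w}, where Δv = v_{(1)} ⊗ v_{(2)} is the tensor coproduct in Sweedler notation, • is the tensor degree of v_{(2)}, and ∇̂ is extended to tensor fields on TM by the Leibniz rule. -/
/-!
Algebraic framework for manifolds with connection: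
`R` plays the role of the ring of smooth functions `C^∞(M)`,
`V` the `C^∞(M)`-module of smooth vector fields `C^∞(TM)`,
`VFAct` the action of vector fields on functions as derivations,
`Conn` a connection (covariant derivative) on the module of sections `E`
of a vector bundle, and `hcd` the higher covariant derivative defined
inductively by
`∇^{j+1}_{X₀,…,X_j} α = ∇_{X₀}(∇^j_{X₁,…,X_j} α) − Σ_k ∇^j_{X₁,…,∇̂_{X₀}X_k,…,X_j} α`.
-/

open TensorProduct

/-- The action of vector fields on smooth functions as (ℝ-linear) derivations. -/
structure VFAct (R : Type*) [CommRing R] [Algebra ℝ R]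
    (V : Type*) [AddCommGroup V] [Module R V] where
  act : V → R → R
  act_add_right : ∀ X f g, act X (f + g) = act X f + act X g
  act_mul_right : ∀ X f g, act X (f * g) = act X f * g + f * act X g
  act_add_left : ∀ X Y f, act (X + Y) f = act X f + act Y f
  act_smul_left : ∀ (f : R) X g, act (f • X) g = f * act X g
  act_algebraMap : ∀ X (r : ℝ), act X (algebraMap ℝ R r) = 0

/-- A connection (covariant derivative) on the `R = C^∞(M)`-module `E` of sections of a
smooth vector bundle, relative to the action `D` of vector fields on functions. -/
structure Conn (R : Type*) [CommRing R] [Algebra ℝ R]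
    (V : Type*) [AddCommGroup V] [Module R V]
    (E : Type*) [AddCommGroup E] [Module R E]
    (D : VFAct R V) where
  d : V → E → E
  d_add_right : ∀ X α β, d X (α + β) = d X α + d X β
  d_smul_right : ∀ X (f : R) α, d X (f • α) = D.act X f • α + f • d X α
  d_add_left : ∀ X Y α, d (X + Y) α = d X α + d Y α
  d_smul_left : ∀ (f : R) X α, d (f • X) α = f • d X α

variable {R : Type*} [CommRing R] [Algebra ℝ R]
variable {V : Type*} [AddCommGroup V] [Module R V]

/-- The higher covariant derivative `∇^j_{X₁,…,X_j}` along a tuple of vector fields,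
defined inductively by
`∇^{j+1}_{X₀,…,X_j} α = ∇_{X₀}(∇^j_{X₁,…,X_j} α) − Σ_k ∇^j_{X₁,…,∇̂_{X₀}X_k,…,X_j} α`. -/
def hcd {E : Type*} [AddCommGroup E] [Module R E] {D : VFAct R V}
    (cT : Conn R V V D) (cE : Conn R V E D) : (j : ℕ) → (Fin j → V) → E → E
  | 0, _, α => α
  | j + 1, X, α =>
      cE.d (X 0) (hcd cT cE j (fun k => X k.succ) α)
        - ∑ k : Fin j,
            hcd cT cE j (Function.update (fun m => X m.succ) k (cT.d (X 0) (X k.succ))) α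

/-- The connection `∇̂` is torsion-free: `∇̂_X Y − ∇̂_Y X = [X,Y]`, where the Lie bracket
is characterized by its action on functions. -/
def TorsionFree {D : VFAct R V} (cT : Conn R V V D) : Prop :=
  ∀ X Y f, D.act (cT.d X Y - cT.d Y X) f = D.act X (D.act Y f) - D.act Y (D.act X f)
/-!
Tensor-field machinery: `TensorAlgebra R V` plays the role of the space
`C^∞(⊗(TM))` of smooth contravariant tensor fields of globally finite order,
`comul` is the tensor coproduct `Δ` (the unique morphism of `R`-algebras with
`Δ X = X ⊗ 1 + 1 ⊗ X` for vector fields `X`), `IsDerivExt` says that a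
connection on an algebra of sections is the Leibniz extension of a connection
on its generators, `IsHigherDeriv` characterizes the tensorial extension
`v ↦ ∇^j_v` (for `v ∈ C^∞(⊗^j TM)`) of the higher covariant derivative, via
`∇^0_f = f·` and `∇^{j+1}_{X₀⊗w} = ∇_{X₀} ∘ ∇^j_w − ∇^j_{∇̂_{X₀} w}`,
and `IsHomConn` characterizes the induced connection on a Hom-bundle. -/

/-- The tensor coproduct on `C^∞(⊗(TM))`: the unique morphism of `R`-algebras
(for the tensor product) with `Δ X = X ⊗ 1 + 1 ⊗ X` for vector fields `X`. -/
noncomputable def comul (R : Type*) (V : Type*) [CommRing R] [AddCommGroup V] [Module R V] :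
    TensorAlgebra R V →ₐ[R] TensorAlgebra R V ⊗[R] TensorAlgebra R V :=
  TensorAlgebra.lift R
    { toFun := fun x => TensorAlgebra.ι R x ⊗ₜ[R] 1 + 1 ⊗ₜ[R] TensorAlgebra.ι R x
      map_add' := by
        intro x y
        simp only [map_add, TensorProduct.add_tmul, TensorProduct.tmul_add]
        abel
      map_smul' := by
        intro c x
        simp only [map_smul, RingHom.id_apply, TensorProduct.smul_tmul',
          TensorProduct.tmul_smul, smul_add] }

/-- `cB` is the Leibniz-rule extension of the connection `cE` to an algebra of sections `B`
generated by the image of `j : E → B`. -/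
structure IsDerivExt {R : Type*} [CommRing R] [Algebra ℝ R]
    {V : Type*} [AddCommGroup V] [Module R V]
    {E : Type*} [AddCommGroup E] [Module R E]
    {B : Type*} [Ring B] [Algebra R B] {D : VFAct R V}
    (cE : Conn R V E D) (cB : Conn R V B D) (j : E → B) : Prop where
  d_gen : ∀ X e, cB.d X (j e) = j (cE.d X e)
  d_mul : ∀ X a b, cB.d X (a * b) = cB.d X a * b + a * cB.d X b

/-- `N` is the tensorial extension `v ↦ ∇^j_v` of the higher covariant derivative of the
connection `cE`, where `v` ranges over tensor fields (`cA` is the Leibniz extension of the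
connection on `TM` to `⊗(TM)`).  It is `C^∞(M)`-linear (tensorial) in `v`, satisfies
`∇^0_f α = f • α`, the inductive formula
`∇_{X₀ ⊗ w} = ∇_{X₀} ∘ ∇_w − ∇_{∇̂_{X₀} w}`, and is ℝ-linear in the section. -/
structure IsHigherDeriv {R : Type*} [CommRing R] [Algebra ℝ R]
    {V : Type*} [AddCommGroup V] [Module R V]
    {E : Type*} [AddCommGroup E] [Module R E] {D : VFAct R V}
    (cE : Conn R V E D) (cA : Conn R V (TensorAlgebra R V) D)
    (N : TensorAlgebra R V →ₗ[R] E → E) : Prop where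
  n_algebraMap : ∀ (f : R) (α : E), N (algebraMap R (TensorAlgebra R V) f) α = f • α
  n_mul_ι : ∀ (X : V) (w : TensorAlgebra R V) (α : E),
      N (TensorAlgebra.ι R X * w) α = cE.d X (N w α) - N (cA.d X w) α
  n_add_right : ∀ v (α β : E), N v (α + β) = N v α + N v β
  n_smul_real : ∀ v (r : ℝ) (α : E), N v (algebraMap ℝ R r • α) = algebraMap ℝ R r • N v α

/-- `cH` is the connection on the Hom-bundle `Hom(E,F)` induced by `cE` and `cF`:
`(∇_X T)(α) = ∇^F_X (T α) − T (∇^E_X α)`. -/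
def IsHomConn {R : Type*} [CommRing R] [Algebra ℝ R]
    {V : Type*} [AddCommGroup V] [Module R V]
    {E : Type*} [AddCommGroup E] [Module R E]
    {F : Type*} [AddCommGroup F] [Module R F] {D : VFAct R V}
    (cE : Conn R V E D) (cF : Conn R V F D) (cH : Conn R V (E →ₗ[R] F) D) : Prop :=
  ∀ X T α, (cH.d X T) α = cF.d X (T α) - T (cE.d X α)

section Aux

variable {R : Type*} [CommRing R] [Algebra ℝ R]
  {V : Type*} [AddCommGroup V] [Module R V]
  {E : Type*} [AddCommGroup E] [Module R E]
  {D : VFAct R V}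

lemma conn_d_zero (c : Conn R V E D) (X : V) : c.d X 0 = 0 := by
  have h := c.d_add_right X 0 0
  rw [add_zero] at h
  exact (left_eq_add.mp h)

lemma conn_d_sub (c : Conn R V E D) (X : V) (a b : E) :
    c.d X (a - b) = c.d X a - c.d X b := by
  have h := c.d_add_right X (a - b) b
  rw [sub_add_cancel] at h
  rw [h]; abel

section DerivExt

variable {B : Type*} [Ring B] [Algebra R B]
  {cE : Conn R V E D} {cB : Conn R V B D} {jmap : E → B}

lemma dext_one (h : IsDerivExt cE cB jmap) (X : V) : cB.d X 1 = 0 := by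
  have h1 := h.d_mul X 1 1
  simp only [mul_one, one_mul] at h1
  exact (left_eq_add.mp h1)

lemma dext_algebraMap (h : IsDerivExt cE cB jmap) (X : V) (r : R) :
    cB.d X (algebraMap R B r) = algebraMap R B (D.act X r) := by
  rw [Algebra.algebraMap_eq_smul_one, cB.d_smul_right, dext_one h,
    smul_zero, add_zero, Algebra.algebraMap_eq_smul_one]

end DerivExt

/-- A "word": the product of `ι` of the entries of a list of vectors. -/
noncomputable def taword (l : List V) : TensorAlgebra R V :=
  (l.map fun x => TensorAlgebra.ι R x).prod

@[simp] lemma taword_nil : (taword ([] : List V) : TensorAlgebra R V) = 1 := rfl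

@[simp] lemma taword_cons (y : V) (l : List V) :
    (taword (y :: l) : TensorAlgebra R V) = TensorAlgebra.ι R y * taword l := by
  simp [taword]

lemma mul_ι_word_span (y : V) (s : Set (TensorAlgebra R V))
    (hs : ∀ l : List V, taword l ∈ s → TensorAlgebra.ι R y * taword l ∈
      Submodule.span R ((fun l : List V => (taword l : TensorAlgebra R V)) '' {l | taword l ∈ s}))
    : True := trivial

/-- Every element of the tensor algebra is in the span of the words. -/
lemma mem_span_taword (v : TensorAlgebra R V) :
    v ∈ Submodule.span R {x : TensorAlgebra R V | ∃ l : List V, x = taword l} := by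
  have key : ∀ a x : TensorAlgebra R V,
      x ∈ Submodule.span R {x : TensorAlgebra R V | ∃ l : List V, x = taword l} →
      a * x ∈ Submodule.span R {x : TensorAlgebra R V | ∃ l : List V, x = taword l} := by
    intro a
    induction a using TensorAlgebra.induction with
    | algebraMap r =>
        intro x hx
        rw [← Algebra.smul_def]
        exact Submodule.smul_mem _ _ hx
    | ι y =>
        intro x hx
        refine Submodule.span_induction ?_ ?_ ?_ ?_ hx
        · rintro u ⟨l, rfl⟩
          refine Submodule.subset_span ⟨y :: l, ?_⟩
          simp
        · simp
        · intro u v _ _ hu hv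
          rw [mul_add]; exact Submodule.add_mem _ hu hv
        · intro r u _ hu
          rw [mul_smul_comm]; exact Submodule.smul_mem _ _ hu
    | mul a b ha hb =>
        intro x hx
        rw [mul_assoc]; exact ha _ (hb _ hx)
    | add a b ha hb =>
        intro x hx
        rw [add_mul]; exact Submodule.add_mem _ (ha _ hx) (hb _ hx)
  have h1 : (1 : TensorAlgebra R V) ∈
      Submodule.span R {x : TensorAlgebra R V | ∃ l : List V, x = taword l} :=
    Submodule.subset_span ⟨[], rfl⟩
  simpa using key v 1 h1

/-- Multiplying a span of words of length `n` by `ι y` lands in span of words of length `n+1`. -/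
lemma mul_ι_span_len {cT : Conn R V V D} (y : V) (n : ℕ)
    {u : TensorAlgebra R V}
    (hu : u ∈ Submodule.span R
      {x : TensorAlgebra R V | ∃ l : List V, l.length = n ∧ x = taword l}) :
    TensorAlgebra.ι R y * u ∈ Submodule.span R
      {x : TensorAlgebra R V | ∃ l : List V, l.length = n + 1 ∧ x = taword l} := by
  refine Submodule.span_induction ?_ ?_ ?_ ?_ hu
  · rintro x ⟨l, hl, rfl⟩
    exact Submodule.subset_span ⟨y :: l, by simp [hl], by simp⟩
  · simp
  · intro a b _ _ ha hb
    rw [mul_add]; exact Submodule.add_mem _ ha hb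
  · intro r a _ ha
    rw [mul_smul_comm]; exact Submodule.smul_mem _ _ ha

/-- The covariant derivative of a word of length `n` is in the span of words of length `n`. -/
lemma d_taword_mem {cT : Conn R V V D} {cA : Conn R V (TensorAlgebra R V) D}
    (hA : IsDerivExt cT cA (TensorAlgebra.ι R)) (X : V) :
    ∀ l : List V, cA.d X (taword l) ∈ Submodule.span R
      {x : TensorAlgebra R V | ∃ l' : List V, l'.length = l.length ∧ x = taword l'} := by
  intro l
  induction l with
  | nil =>
      simp [dext_one hA]
  | cons y l ih =>
      rw [taword_cons, hA.d_mul, hA.d_gen]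
      refine Submodule.add_mem _ ?_ ?_
      · exact Submodule.subset_span ⟨cT.d X y :: l, by simp, by simp⟩
      · exact mul_ι_span_len (cT := cT) y l.length ih

end Aux

section Coderivation

variable {R : Type*} [CommRing R] [Algebra ℝ R]
  {V : Type*} [AddCommGroup V] [Module R V]
  {D : VFAct R V}

/-- The extension of `∇̂_X` to `⊗(TM) ⊗ ⊗(TM)` by the Leibniz rule over the tensor sign. -/
noncomputable def Kmap (cA : Conn R V (TensorAlgebra R V) D) (X : V) :
    TensorAlgebra R V ⊗[R] TensorAlgebra R V →+ TensorAlgebra R V ⊗[R] TensorAlgebra R V :=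
  TensorProduct.liftAddHom
    (AddMonoidHom.mk'
      (fun x => AddMonoidHom.mk'
        (fun y => cA.d X x ⊗ₜ[R] y + x ⊗ₜ[R] cA.d X y)
        (by
          intro y z
          rw [cA.d_add_right]
          simp only [TensorProduct.tmul_add]
          abel))
      (by
        intro x x'
        ext y
        simp only [AddMonoidHom.mk'_apply, AddMonoidHom.add_apply]
        rw [cA.d_add_right]
        simp only [TensorProduct.add_tmul]
        abel))
    (by
      intro r x y
      simp only [AddMonoidHom.mk'_apply]
      rw [cA.d_smul_right, cA.d_smul_right]
      simp only [TensorProduct.add_tmul, TensorProduct.tmul_add, TensorProduct.smul_tmul]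
      abel)

@[simp] lemma Kmap_tmul (cA : Conn R V (TensorAlgebra R V) D) (X : V)
    (x y : TensorAlgebra R V) :
    Kmap cA X (x ⊗ₜ[R] y) = cA.d X x ⊗ₜ[R] y + x ⊗ₜ[R] cA.d X y := rfl

lemma Kmap_mul {cT : Conn R V V D} {cA : Conn R V (TensorAlgebra R V) D}
    (hA : IsDerivExt cT cA (TensorAlgebra.ι R)) (X : V)
    (s t : TensorAlgebra R V ⊗[R] TensorAlgebra R V) :
    Kmap cA X (s * t) = Kmap cA X s * t + s * Kmap cA X t := by
  induction s using TensorProduct.induction_on with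
  | zero => simp
  | add s s' hs hs' =>
      rw [add_mul, map_add, hs, hs', map_add]
      simp only [add_mul]
      abel
  | tmul x y =>
      induction t using TensorProduct.induction_on with
      | zero => simp
      | add t t' ht ht' =>
          rw [mul_add, map_add, ht, ht', map_add]
          simp only [mul_add]
          abel
      | tmul x' y' =>
          rw [Algebra.TensorProduct.tmul_mul_tmul, Kmap_tmul, Kmap_tmul, Kmap_tmul,
            hA.d_mul, hA.d_mul]
          simp only [TensorProduct.add_tmul, TensorProduct.tmul_add, add_mul, mul_add,
            Algebra.TensorProduct.tmul_mul_tmul]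
          abel

/-- `∇̂_X` is a coderivation with respect to the tensor coproduct. -/
lemma comul_d {cT : Conn R V V D} {cA : Conn R V (TensorAlgebra R V) D}
    (hA : IsDerivExt cT cA (TensorAlgebra.ι R)) (X : V)
    (v : TensorAlgebra R V) :
    comul R V (cA.d X v) = Kmap cA X (comul R V v) := by
  induction v using TensorAlgebra.induction with
  | algebraMap r =>
      rw [dext_algebraMap hA, AlgHom.commutes, AlgHom.commutes,
        Algebra.TensorProduct.algebraMap_apply, Algebra.TensorProduct.algebraMap_apply,
        Kmap_tmul, dext_algebraMap hA, dext_one hA, TensorProduct.tmul_zero, add_zero]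
  | ι x =>
      have hι : ∀ y : V, comul R V (TensorAlgebra.ι R y)
          = TensorAlgebra.ι R y ⊗ₜ[R] 1 + 1 ⊗ₜ[R] TensorAlgebra.ι R y := by
        intro y
        simp [comul, TensorAlgebra.lift_ι_apply]
      rw [hA.d_gen, hι, hι, map_add, Kmap_tmul, Kmap_tmul, dext_one hA, hA.d_gen,
        TensorProduct.tmul_zero, TensorProduct.zero_tmul, add_zero, zero_add]
  | mul a b ha hb =>
      rw [hA.d_mul, map_add, map_mul, map_mul, map_mul, ha, hb, Kmap_mul hA]
  | add a b ha hb =>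
      rw [cA.d_add_right, map_add, map_add, ha, hb, map_add]

end Coderivation

section Main

variable {R : Type*} [CommRing R] [Algebra ℝ R]
  {V : Type*} [AddCommGroup V] [Module R V]
  {E : Type*} [AddCommGroup E] [Module R E]
  {D : VFAct R V}

/-- The linear map `x ⊗ y ↦ ∇_{x ⊗ ∇̂_y w} α`. -/
noncomputable def Lmap (N : TensorAlgebra R V →ₗ[R] E → E)
    (NA : TensorAlgebra R V →ₗ[R] TensorAlgebra R V → TensorAlgebra R V)
    (w : TensorAlgebra R V) (α : E) :
    TensorAlgebra R V ⊗[R] TensorAlgebra R V →ₗ[R] E :=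
  (((LinearMap.proj α : (E → E) →ₗ[R] E).comp N).comp
    ((LinearMap.mul' R (TensorAlgebra R V)).comp
      (TensorProduct.map LinearMap.id
        ((LinearMap.proj w : (TensorAlgebra R V → TensorAlgebra R V) →ₗ[R]
            TensorAlgebra R V).comp NA))))

@[simp] lemma Lmap_tmul (N : TensorAlgebra R V →ₗ[R] E → E)
    (NA : TensorAlgebra R V →ₗ[R] TensorAlgebra R V → TensorAlgebra R V)
    (w : TensorAlgebra R V) (α : E) (x y : TensorAlgebra R V) :
    Lmap N NA w α (x ⊗ₜ[R] y) = N (x * NA y w) α := by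
  simp [Lmap]

lemma N_apply_add (N : TensorAlgebra R V →ₗ[R] E → E) (a b : TensorAlgebra R V) (α : E) :
    N (a + b) α = N a α + N b α := by rw [map_add]; rfl

lemma N_apply_sub (N : TensorAlgebra R V →ₗ[R] E → E) (a b : TensorAlgebra R V) (α : E) :
    N (a - b) α = N a α - N b α := by rw [map_sub]; rfl

lemma N_apply_smul (N : TensorAlgebra R V →ₗ[R] E → E) (r : R) (a : TensorAlgebra R V) (α : E) :
    N (r • a) α = r • N a α := by rw [map_smul]; rfl

lemma N_apply_zero (N : TensorAlgebra R V →ₗ[R] E → E) (α : E) :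
    N 0 α = 0 := by rw [map_zero]; rfl

lemma Lmap_step {cT : Conn R V V D} {cE : Conn R V E D}
    {cA : Conn R V (TensorAlgebra R V) D}
    (hA : IsDerivExt cT cA (TensorAlgebra.ι R))
    {N : TensorAlgebra R V →ₗ[R] E → E} (hN : IsHigherDeriv cE cA N)
    {NA : TensorAlgebra R V →ₗ[R] TensorAlgebra R V → TensorAlgebra R V}
    (hNA : IsHigherDeriv cA cA NA)
    (y : V) (w : TensorAlgebra R V) (α : E)
    (s : TensorAlgebra R V ⊗[R] TensorAlgebra R V) :
    Lmap N NA w α ((TensorAlgebra.ι R y ⊗ₜ[R] 1 + 1 ⊗ₜ[R] TensorAlgebra.ι R y) * s)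
      = cE.d y (Lmap N NA w α s) - Lmap N NA w α (Kmap cA y s) := by
  induction s using TensorProduct.induction_on with
  | zero => simp [conn_d_zero]
  | add s t hs ht =>
      simp only [mul_add, map_add, cE.d_add_right]
      rw [hs, ht]
      abel
  | tmul x z =>
      rw [add_mul, Algebra.TensorProduct.tmul_mul_tmul, Algebra.TensorProduct.tmul_mul_tmul,
        one_mul, one_mul, map_add, Lmap_tmul, Lmap_tmul, Kmap_tmul, map_add,
        Lmap_tmul, Lmap_tmul, Lmap_tmul]
      rw [mul_assoc, hN.n_mul_ι, hA.d_mul, N_apply_add, hNA.n_mul_ι, mul_sub, N_apply_sub]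
      abel

end Main

/-- Composition formula for higher covariant derivatives.
For all `v ∈ C^∞(⊗^i TM)` and `w ∈ C^∞(⊗^j TM)` one has the equality of operators on
`C^∞(E)`:  `∇^i_v ∘ ∇^j_w = ∇^{i+j−•}_{v₍₁₎ ⊗ ∇̂^•_{v₍₂₎} w}`, where `Δ v = v₍₁₎ ⊗ v₍₂₎`
is the tensor coproduct in Sweedler notation and `∇̂` is extended to tensor fields by
the Leibniz rule.  Here `N` (resp. `NA`) is the tensorial higher covariant derivative on
`C^∞(E)` (resp. on tensor fields), and the right-hand side is the linear map
`x ⊗ y ↦ ∇_{x ⊗ ∇̂_y w}` applied to `Δ v`. -/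
theorem statement0
    {R : Type*} [CommRing R] [Algebra ℝ R]
    {V : Type*} [AddCommGroup V] [Module R V]
    {E : Type*} [AddCommGroup E] [Module R E]
    {D : VFAct R V} (cT : Conn R V V D) (cE : Conn R V E D)
    (cA : Conn R V (TensorAlgebra R V) D)
    (hA : IsDerivExt cT cA (TensorAlgebra.ι R))
    (N : TensorAlgebra R V →ₗ[R] E → E) (hN : IsHigherDeriv cE cA N)
    (NA : TensorAlgebra R V →ₗ[R] TensorAlgebra R V → TensorAlgebra R V)
    (hNA : IsHigherDeriv cA cA NA) :
    ∀ (v w : TensorAlgebra R V) (α : E),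
      N v (N w α) =
        (((LinearMap.proj α : (E → E) →ₗ[R] E).comp N).comp
          ((LinearMap.mul' R (TensorAlgebra R V)).comp
            (TensorProduct.map LinearMap.id
              ((LinearMap.proj w : (TensorAlgebra R V → TensorAlgebra R V) →ₗ[R]
                  TensorAlgebra R V).comp NA))))
          (comul R V v) := by
  -- It suffices to prove the statement with the RHS phrased via `Lmap`.
  suffices H : ∀ (v w : TensorAlgebra R V) (α : E),
      N v (N w α) = Lmap N NA w α (comul R V v) by
    intro v w α
    exact H v w α
  -- The property, as a predicate on `v`.
  set P : TensorAlgebra R V → Prop :=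
    fun v => ∀ (w : TensorAlgebra R V) (α : E),
      N v (N w α) = Lmap N NA w α (comul R V v) with hP
  -- P is stable under spans.
  have Pspan : ∀ (s : Set (TensorAlgebra R V)), (∀ x ∈ s, P x) →
      ∀ v ∈ Submodule.span R s, P v := by
    intro s hs v hv
    refine Submodule.span_induction hs ?_ ?_ ?_ hv
    · intro w α
      rw [N_apply_zero, map_zero, map_zero]
    · intro a b _ _ ha hb w α
      rw [N_apply_add, map_add, map_add, ha, hb]
    · intro r a _ ha w α
      rw [N_apply_smul, map_smul, map_smul, ha]
  -- P holds for every word, by induction on the length.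
  have Pword : ∀ (n : ℕ) (l : List V), l.length = n → P (taword l) := by
    intro n
    induction n with
    | zero =>
        intro l hl w α
        rw [List.length_eq_zero_iff] at hl
        subst hl
        rw [taword_nil]
        have hN1 : ∀ β : E, N (1 : TensorAlgebra R V) β = β := by
          intro β
          have h := hN.n_algebraMap (1 : R) β
          rw [map_one, one_smul] at h
          exact h
        have hNA1 : NA (1 : TensorAlgebra R V) w = w := by
          have h := hNA.n_algebraMap (1 : R) w
          rw [map_one, one_smul] at h
          exact h
        rw [hN1, map_one, Algebra.TensorProduct.one_def, Lmap_tmul, hNA1, one_mul]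
    | succ n ih =>
        intro l hl w α
        match l, hl with
        | y :: l, hl =>
          have hln : l.length = n := by simpa using hl
          have hPu : P (taword l) := ih l hln
          have hPdu : P (cA.d y (taword l)) := by
            refine Pspan _ ?_ _ (d_taword_mem hA y l)
            rintro x ⟨l', hl', rfl⟩
            exact ih l' (by rw [hl', hln])
          rw [taword_cons, hN.n_mul_ι, hPu w α, hPdu w α, comul_d hA,
            map_mul]
          have hι : comul R V (TensorAlgebra.ι R y)
              = TensorAlgebra.ι R y ⊗ₜ[R] 1 + 1 ⊗ₜ[R] TensorAlgebra.ι R y := by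
            simp [comul, TensorAlgebra.lift_ι_apply]
          rw [hι, Lmap_step hA hN hNA]
  -- Conclude by spanning.
  intro v w α
  refine Pspan _ ?_ v (mem_span_taword v) w α
  rintro x ⟨l, rfl⟩
  exact Pword l.length l rfl
end

section
/- Contraction formula: if ω ∈ C∞(Hom(E,F)), α ∈ C∞(E), and v ∈ C∞(⊗^j TM), then ∇^j_v(ω(α)) = (∇^{j−•}_{v_{(1)}} ω)(∇^•_{v_{(2)}} α), where Δv = v_{(1)} ⊗ v_{(2)} is the tensor coproduct in Sweedler notation, • is the tensor degree of v_{(2)}, and Hom(E,F) carries the connection (∇_X T)(α) = ∇^F_X(Tα) − T(∇^E_X α). -/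
/-!
Algebraic framework for manifolds with connection:
`R` plays the role of the ring of smooth functions `C^∞(M)`,
`V` the `C^∞(M)`-module of smooth vector fields `C^∞(TM)`,
`VFAct` the action of vector fields on functions as derivations,
`Conn` a connection (covariant derivative) on the module of sections `E`
of a vector bundle, and `hcd` the higher covariant derivative defined
inductively by
`∇^{j+1}_{X₀,…,X_j} α = ∇_{X₀}(∇^j_{X₁,…,X_j} α) − Σ_k ∇^j_{X₁,…,∇̂_{X₀}X_k,…,X_j} α`.
-/

open TensorProduct

variable {R : Type*} [CommRing R] [Algebra ℝ R]
variable {V : Type*} [AddCommGroup V] [Module R V]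

/-! ### Auxiliary machinery for the proof of `statement3` -/

section Aux3

variable {R : Type*} [CommRing R] [Algebra ℝ R]
variable {V : Type*} [AddCommGroup V] [Module R V]

/-- A connection, bundled as an additive monoid hom in the section argument. -/
def Conn.dHom {E : Type*} [AddCommGroup E] [Module R E] {D : VFAct R V}
    (c : Conn R V E D) (X : V) : E →+ E :=
  AddMonoidHom.mk' (c.d X) (c.d_add_right X)

theorem Conn.d_zero {E : Type*} [AddCommGroup E] [Module R E] {D : VFAct R V}
    (c : Conn R V E D) (X : V) : c.d X 0 = 0 := map_zero (c.dHom X)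

theorem Conn.d_sub {E : Type*} [AddCommGroup E] [Module R E] {D : VFAct R V}
    (c : Conn R V E D) (X : V) (a b : E) : c.d X (a - b) = c.d X a - c.d X b :=
  map_sub (c.dHom X) a b

variable {D : VFAct R V}

theorem derivext_d_one (cT : Conn R V V D) (cA : Conn R V (TensorAlgebra R V) D)
    (hA : IsDerivExt cT cA (TensorAlgebra.ι R)) (X : V) : cA.d X 1 = 0 := by
  have h := hA.d_mul X 1 1
  rw [one_mul, one_mul, mul_one] at h
  have h2 : cA.d X 1 + 0 = cA.d X 1 + cA.d X 1 := by rw [add_zero]; exact h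
  exact (add_left_cancel h2).symm

theorem derivext_d_algebraMap (cT : Conn R V V D) (cA : Conn R V (TensorAlgebra R V) D)
    (hA : IsDerivExt cT cA (TensorAlgebra.ι R)) (X : V) (f : R) :
    cA.d X (algebraMap R (TensorAlgebra R V) f) = algebraMap R (TensorAlgebra R V) (D.act X f) := by
  rw [Algebra.algebraMap_eq_smul_one, Algebra.algebraMap_eq_smul_one, cA.d_smul_right,
    derivext_d_one cT cA hA, smul_zero, add_zero]

/-- The "tensor product derivation" `a ⊗ b ↦ ∇_X a ⊗ b + a ⊗ ∇_X b` on `⊗TM ⊗ ⊗TM`,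
well-defined because the cross terms balance. -/
noncomputable def D2 (cA : Conn R V (TensorAlgebra R V) D) (X : V) :
    TensorAlgebra R V ⊗[R] TensorAlgebra R V →+ TensorAlgebra R V ⊗[R] TensorAlgebra R V :=
  TensorProduct.liftAddHom
    { toFun := fun a =>
        { toFun := fun b => cA.d X a ⊗ₜ[R] b + a ⊗ₜ[R] cA.d X b
          map_zero' := by simp [cA.d_zero]
          map_add' := by
            intro b c
            rw [cA.d_add_right, TensorProduct.tmul_add, TensorProduct.tmul_add]
            abel }
      map_zero' := by
        ext b
        simp [cA.d_zero]
      map_add' := by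
        intro a b
        ext c
        simp only [AddMonoidHom.coe_mk, ZeroHom.coe_mk, AddMonoidHom.add_apply]
        rw [cA.d_add_right, TensorProduct.add_tmul, TensorProduct.add_tmul]
        abel }
    (by
      intro f a b
      simp only [AddMonoidHom.coe_mk, ZeroHom.coe_mk]
      rw [cA.d_smul_right, cA.d_smul_right, TensorProduct.add_tmul, TensorProduct.tmul_add,
        TensorProduct.smul_tmul, TensorProduct.smul_tmul, TensorProduct.smul_tmul]
      abel)

theorem D2_tmul (cA : Conn R V (TensorAlgebra R V) D) (X : V) (a b : TensorAlgebra R V) :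
    D2 cA X (a ⊗ₜ[R] b) = cA.d X a ⊗ₜ[R] b + a ⊗ₜ[R] cA.d X b := by
  simp [D2]

theorem D2_mul (cT : Conn R V V D) (cA : Conn R V (TensorAlgebra R V) D)
    (hA : IsDerivExt cT cA (TensorAlgebra.ι R)) (X : V)
    (s t : TensorAlgebra R V ⊗[R] TensorAlgebra R V) :
    D2 cA X (s * t) = D2 cA X s * t + s * D2 cA X t := by
  induction s using TensorProduct.induction_on with
  | zero => simp
  | tmul a b =>
    induction t using TensorProduct.induction_on with
    | zero => simp
    | tmul c d =>
      rw [Algebra.TensorProduct.tmul_mul_tmul, D2_tmul, D2_tmul, D2_tmul, hA.d_mul, hA.d_mul,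
        TensorProduct.add_tmul, TensorProduct.tmul_add, add_mul, mul_add,
        Algebra.TensorProduct.tmul_mul_tmul, Algebra.TensorProduct.tmul_mul_tmul,
        Algebra.TensorProduct.tmul_mul_tmul, Algebra.TensorProduct.tmul_mul_tmul]
      abel
    | add t1 t2 h1 h2 =>
      rw [mul_add, map_add, h1, h2, map_add, mul_add, mul_add]
      abel
  | add s1 s2 h1 h2 =>
    rw [add_mul, map_add, h1, h2, map_add, add_mul, add_mul]
    abel

theorem comul_ι (x : V) :
    comul R V (TensorAlgebra.ι R x) =
      TensorAlgebra.ι R x ⊗ₜ[R] 1 + 1 ⊗ₜ[R] TensorAlgebra.ι R x := by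
  simp [comul]

theorem comul_dA (cT : Conn R V V D) (cA : Conn R V (TensorAlgebra R V) D)
    (hA : IsDerivExt cT cA (TensorAlgebra.ι R)) (X : V) (w : TensorAlgebra R V) :
    comul R V (cA.d X w) = D2 cA X (comul R V w) := by
  induction w using TensorAlgebra.induction with
  | algebraMap f =>
    rw [derivext_d_algebraMap cT cA hA, AlgHom.commutes, AlgHom.commutes,
      Algebra.TensorProduct.algebraMap_apply, Algebra.TensorProduct.algebraMap_apply, D2_tmul,
      derivext_d_algebraMap cT cA hA, derivext_d_one cT cA hA, TensorProduct.tmul_zero, add_zero]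
  | ι x =>
    rw [hA.d_gen, comul_ι, comul_ι, map_add, D2_tmul, D2_tmul, hA.d_gen,
      derivext_d_one cT cA hA, TensorProduct.tmul_zero, TensorProduct.zero_tmul,
      add_zero, zero_add]
  | mul a b ha hb =>
    rw [hA.d_mul, map_add, map_mul, map_mul, ha, hb, map_mul, D2_mul cT cA hA]
  | add a b ha hb =>
    rw [cA.d_add_right, map_add, map_add, ha, hb, map_add]

/-- The filtration of the tensor algebra by "monomial length". -/
def Mfil (R : Type*) (V : Type*) [CommRing R] [AddCommGroup V] [Module R V] :
    ℕ → Submodule R (TensorAlgebra R V)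
  | 0 => Submodule.span R {1}
  | n + 1 =>
    Mfil R V n ⊔ Submodule.span R
      {x | ∃ (X : V) (w : TensorAlgebra R V), w ∈ Mfil R V n ∧ x = TensorAlgebra.ι R X * w}

theorem Mfil_mono : Monotone (Mfil R V) :=
  monotone_nat_of_le_succ fun _ => le_sup_left

theorem Mfil_mul : ∀ m n : ℕ, ∀ a ∈ Mfil R V m, ∀ b ∈ Mfil R V n, a * b ∈ Mfil R V (m + n) := by
  intro m
  induction m with
  | zero =>
    intro n a ha b hb
    rw [Mfil] at ha
    obtain ⟨f, rfl⟩ := Submodule.mem_span_singleton.mp ha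
    rw [smul_mul_assoc, one_mul, zero_add]
    exact Submodule.smul_mem _ f hb
  | succ m ih =>
    intro n a ha b hb
    have key : Mfil R V (m + 1) ≤
        Submodule.comap (LinearMap.mulRight R b) (Mfil R V (m + 1 + n)) := by
      rw [Mfil]
      apply sup_le
      · intro a' ha'
        simp only [Submodule.mem_comap, LinearMap.mulRight_apply]
        exact Mfil_mono (by omega) (ih n a' ha' b hb)
      · rw [Submodule.span_le]
        rintro _ ⟨X, w, hw, rfl⟩
        simp only [SetLike.mem_coe, Submodule.mem_comap, LinearMap.mulRight_apply, mul_assoc]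
        have : m + 1 + n = (m + n) + 1 := by omega
        rw [this, Mfil]
        exact Submodule.mem_sup_right (Submodule.subset_span ⟨X, w * b, ih n w hw b hb, rfl⟩)
    exact key ha

theorem Mfil_exhaust (x : TensorAlgebra R V) : ∃ n, x ∈ Mfil R V n := by
  induction x using TensorAlgebra.induction with
  | algebraMap r =>
    refine ⟨0, ?_⟩
    rw [Mfil, Algebra.algebraMap_eq_smul_one]
    exact Submodule.smul_mem _ r (Submodule.mem_span_singleton_self 1)
  | ι x =>
    refine ⟨1, ?_⟩
    rw [Mfil]
    refine Submodule.mem_sup_right (Submodule.subset_span ⟨x, 1, ?_, (mul_one _).symm⟩)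
    rw [Mfil]
    exact Submodule.mem_span_singleton_self 1
  | mul a b ha hb =>
    obtain ⟨m, hm⟩ := ha
    obtain ⟨n, hn⟩ := hb
    exact ⟨m + n, Mfil_mul m n a hm b hn⟩
  | add a b ha hb =>
    obtain ⟨m, hm⟩ := ha
    obtain ⟨n, hn⟩ := hb
    exact ⟨max m n, add_mem (Mfil_mono (le_max_left m n) hm) (Mfil_mono (le_max_right m n) hn)⟩

theorem Mfil_d (cT : Conn R V V D) (cA : Conn R V (TensorAlgebra R V) D)
    (hA : IsDerivExt cT cA (TensorAlgebra.ι R)) (X : V) :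
    ∀ n : ℕ, ∀ w ∈ Mfil R V n, cA.d X w ∈ Mfil R V n := by
  intro n
  induction n with
  | zero =>
    intro w hw
    rw [Mfil] at hw ⊢
    obtain ⟨f, rfl⟩ := Submodule.mem_span_singleton.mp hw
    rw [cA.d_smul_right, derivext_d_one cT cA hA, smul_zero, add_zero]
    exact Submodule.smul_mem _ _ (Submodule.mem_span_singleton_self 1)
  | succ n ih =>
    let K' : Submodule R (TensorAlgebra R V) :=
      { carrier := {w | w ∈ Mfil R V (n + 1) ∧ cA.d X w ∈ Mfil R V (n + 1)}
        add_mem' := by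
          rintro x y ⟨hx1, hx2⟩ ⟨hy1, hy2⟩
          exact ⟨add_mem hx1 hy1, by rw [cA.d_add_right]; exact add_mem hx2 hy2⟩
        zero_mem' := ⟨zero_mem _, by rw [cA.d_zero]; exact zero_mem _⟩
        smul_mem' := by
          rintro f x ⟨hx1, hx2⟩
          refine ⟨Submodule.smul_mem _ f hx1, ?_⟩
          rw [cA.d_smul_right]
          exact add_mem (Submodule.smul_mem _ _ hx1) (Submodule.smul_mem _ _ hx2) }
    have hK : Mfil R V (n + 1) ≤ K' := by
      rw [Mfil]
      apply sup_le
      · intro w hw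
        exact ⟨Mfil_mono (Nat.le_succ n) hw, Mfil_mono (Nat.le_succ n) (ih w hw)⟩
      · rw [Submodule.span_le]
        rintro _ ⟨Y, w, hw, rfl⟩
        have hmem : TensorAlgebra.ι R Y * w ∈ Mfil R V (n + 1) := by
          rw [Mfil]
          exact Submodule.mem_sup_right (Submodule.subset_span ⟨Y, w, hw, rfl⟩)
        refine ⟨hmem, ?_⟩
        rw [hA.d_mul, hA.d_gen, Mfil]
        exact add_mem
          (Submodule.mem_sup_right (Submodule.subset_span ⟨cT.d X Y, w, hw, rfl⟩))
          (Submodule.mem_sup_right (Submodule.subset_span ⟨Y, cA.d X w, ih w hw, rfl⟩))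
    intro w hw
    exact (hK hw).2

variable {E : Type*} [AddCommGroup E] [Module R E]
variable {F : Type*} [AddCommGroup F] [Module R F]

/-- The contraction map `x ⊗ y ↦ (∇_x ω)(∇_y α)` appearing in `statement3`. -/
noncomputable def Phi (NH : TensorAlgebra R V →ₗ[R] (E →ₗ[R] F) → (E →ₗ[R] F))
    (NE : TensorAlgebra R V →ₗ[R] E → E) (ω : E →ₗ[R] F) (α : E) :
    TensorAlgebra R V ⊗[R] TensorAlgebra R V →ₗ[R] F :=
  (TensorProduct.lift (LinearMap.id : (E →ₗ[R] F) →ₗ[R] (E →ₗ[R] F))).comp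
    (TensorProduct.map
      ((LinearMap.proj ω : ((E →ₗ[R] F) → (E →ₗ[R] F)) →ₗ[R] (E →ₗ[R] F)).comp NH)
      ((LinearMap.proj α : (E → E) →ₗ[R] E).comp NE))

theorem Phi_tmul (NH : TensorAlgebra R V →ₗ[R] (E →ₗ[R] F) → (E →ₗ[R] F))
    (NE : TensorAlgebra R V →ₗ[R] E → E) (ω : E →ₗ[R] F) (α : E)
    (a b : TensorAlgebra R V) :
    Phi NH NE ω α (a ⊗ₜ[R] b) = (NH a ω) (NE b α) := by
  simp [Phi]

theorem keyD (cE : Conn R V E D) (cF : Conn R V F D) (cH : Conn R V (E →ₗ[R] F) D)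
    (hH : IsHomConn cE cF cH) (cA : Conn R V (TensorAlgebra R V) D)
    (NE : TensorAlgebra R V →ₗ[R] E → E) (hNE : IsHigherDeriv cE cA NE)
    (NH : TensorAlgebra R V →ₗ[R] (E →ₗ[R] F) → (E →ₗ[R] F)) (hNH : IsHigherDeriv cH cA NH)
    (X : V) (ω : E →ₗ[R] F) (α : E)
    (t : TensorAlgebra R V ⊗[R] TensorAlgebra R V) :
    Phi NH NE ω α ((TensorAlgebra.ι R X ⊗ₜ[R] 1 + 1 ⊗ₜ[R] TensorAlgebra.ι R X) * t)
      = cF.d X (Phi NH NE ω α t) - Phi NH NE ω α (D2 cA X t) := by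
  induction t using TensorProduct.induction_on with
  | zero => simp [cF.d_zero]
  | tmul a b =>
    rw [add_mul, Algebra.TensorProduct.tmul_mul_tmul, Algebra.TensorProduct.tmul_mul_tmul,
      one_mul, one_mul, map_add, Phi_tmul, Phi_tmul, D2_tmul, map_add, Phi_tmul, Phi_tmul,
      hNH.n_mul_ι X a ω, hNE.n_mul_ι X b α, LinearMap.sub_apply, hH X (NH a ω) (NE b α),
      map_sub (NH a ω)]
    abel
  | add t1 t2 h1 h2 =>
    rw [mul_add, map_add, h1, h2]
    simp only [map_add, cF.d_add_right]
    abel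

end Aux3

/-- Contraction formula.  If `ω ∈ C^∞(Hom(E,F))`, `α ∈ C^∞(E)` and
`v ∈ C^∞(⊗^j TM)`, then `∇^j_v (ω(α)) = (∇^{j−•}_{v₍₁₎} ω)(∇^•_{v₍₂₎} α)`, where
`Hom(E,F)` carries the induced connection `(∇_X T)(α) = ∇^F_X(Tα) − T(∇^E_X α)`
(hypothesis `hH`), and `Δ v = v₍₁₎ ⊗ v₍₂₎` is the tensor coproduct.  The right-hand
side is the linear map `x ⊗ y ↦ (∇_x ω)(∇_y α)` applied to `Δ v`. -/
theorem statement3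
    {R : Type*} [CommRing R] [Algebra ℝ R]
    {V : Type*} [AddCommGroup V] [Module R V]
    {E : Type*} [AddCommGroup E] [Module R E]
    {F : Type*} [AddCommGroup F] [Module R F]
    {D : VFAct R V} (cT : Conn R V V D)
    (cE : Conn R V E D) (cF : Conn R V F D)
    (cH : Conn R V (E →ₗ[R] F) D) (hH : IsHomConn cE cF cH)
    (cA : Conn R V (TensorAlgebra R V) D)
    (hA : IsDerivExt cT cA (TensorAlgebra.ι R))
    (NE : TensorAlgebra R V →ₗ[R] E → E) (hNE : IsHigherDeriv cE cA NE)
    (NF : TensorAlgebra R V →ₗ[R] F → F) (hNF : IsHigherDeriv cF cA NF)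
    (NH : TensorAlgebra R V →ₗ[R] (E →ₗ[R] F) → (E →ₗ[R] F))
    (hNH : IsHigherDeriv cH cA NH) :
    ∀ (v : TensorAlgebra R V) (ω : E →ₗ[R] F) (α : E),
      NF v (ω α) =
        ((TensorProduct.lift (LinearMap.id : (E →ₗ[R] F) →ₗ[R] (E →ₗ[R] F))).comp
          (TensorProduct.map
            ((LinearMap.proj ω : ((E →ₗ[R] F) → (E →ₗ[R] F)) →ₗ[R] (E →ₗ[R] F)).comp NH)
            ((LinearMap.proj α : (E → E) →ₗ[R] E).comp NE)))
          (comul R V v) := by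
  suffices h : ∀ (v : TensorAlgebra R V) (ω : E →ₗ[R] F) (α : E),
      NF v (ω α) = Phi NH NE ω α (comul R V v) by
    intro v ω α
    exact h v ω α
  -- The set of tensor fields satisfying the contraction formula is a submodule.
  let S : Submodule R (TensorAlgebra R V) :=
    { carrier := {v | ∀ (ω : E →ₗ[R] F) (α : E), NF v (ω α) = Phi NH NE ω α (comul R V v)}
      add_mem' := by
        intro x y hx hy ω α
        rw [map_add, Pi.add_apply, hx ω α, hy ω α, map_add, map_add]
      zero_mem' := by
        intro ω α
        rw [map_zero, map_zero, map_zero]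
        rfl
      smul_mem' := by
        intro f x hx ω α
        rw [map_smul, Pi.smul_apply, hx ω α, map_smul, map_smul] }
  have base : ∀ f : R, algebraMap R (TensorAlgebra R V) f ∈ S := by
    intro f ω α
    have hNH1 : NH (1 : TensorAlgebra R V) ω = ω := by
      have h1 := hNH.n_algebraMap 1 ω
      rw [map_one, one_smul] at h1
      exact h1
    have hNE1 : NE (1 : TensorAlgebra R V) α = α := by
      have h1 := hNE.n_algebraMap 1 α
      rw [map_one, one_smul] at h1
      exact h1
    rw [hNF.n_algebraMap f (ω α), AlgHom.commutes, Algebra.TensorProduct.algebraMap_apply,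
      Algebra.algebraMap_eq_smul_one, ← TensorProduct.smul_tmul', map_smul, Phi_tmul,
      hNH1, hNE1]
  have step : ∀ (X : V) (w : TensorAlgebra R V), w ∈ S → cA.d X w ∈ S →
      TensorAlgebra.ι R X * w ∈ S := by
    intro X w hw hdw ω α
    rw [hNF.n_mul_ι X w (ω α), hw ω α, hdw ω α, map_mul, comul_ι,
      keyD cE cF cH hH cA NE hNE NH hNH X ω α, comul_dA cT cA hA]
  have H : ∀ n : ℕ, Mfil R V n ≤ S := by
    intro n
    induction n with
    | zero =>
      rw [Mfil, Submodule.span_le]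
      intro x hx
      rw [Set.mem_singleton_iff] at hx
      subst hx
      have := base 1
      rwa [map_one] at this
    | succ n ih =>
      rw [Mfil]
      apply sup_le ih
      rw [Submodule.span_le]
      rintro _ ⟨X, w, hw, rfl⟩
      exact step X w (ih hw) (ih (Mfil_d cT cA hA X n w hw))
  intro v ω α
  obtain ⟨n, hn⟩ := Mfil_exhaust v
  exact H n hn ω α
end

section
/- Tensoriality of even-order antisymmetrized higher covariant derivatives: if the connection ∇̂ on TM is torsion-free, then for every j ≥ 1 and all smooth vector fields v_1, w_1, …, v_j, w_j on M, the operator ∇^{2j}_{(v_1⊗w_1 − w_1⊗v_1)⊗⋯⊗(v_j⊗w_j − w_j⊗v_j)} on C∞(E) is C∞(M)-linear, i.e. for every f ∈ C∞(M) and α ∈ C∞(E), ∇^{2j}_{(v_1⊗w_1 − w_1⊗v_1)⊗⋯⊗(v_j⊗w_j − w_j⊗v_j)}(f·α) = f·∇^{2j}_{(v_1⊗w_1 − w_1⊗v_1)⊗⋯⊗(v_j⊗w_j − w_j⊗v_j)}α. -/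
/-!
Algebraic framework for manifolds with connection:
`R` plays the role of the ring of smooth functions `C^∞(M)`,
`V` the `C^∞(M)`-module of smooth vector fields `C^∞(TM)`,
`VFAct` the action of vector fields on functions as derivations,
`Conn` a connection (covariant derivative) on the module of sections `E`
of a vector bundle, and `hcd` the higher covariant derivative defined
inductively by
`∇^{j+1}_{X₀,…,X_j} α = ∇_{X₀}(∇^j_{X₁,…,X_j} α) − Σ_k ∇^j_{X₁,…,∇̂_{X₀}X_k,…,X_j} α`.
-/

open TensorProduct

variable {R : Type*} [CommRing R] [Algebra ℝ R]
variable {V : Type*} [AddCommGroup V] [Module R V]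

/-- The `2j`-tuple of vector fields obtained from
`(v₁ ⊗ w₁ − w₁ ⊗ v₁) ⊗ ⋯ ⊗ (v_j ⊗ w_j − w_j ⊗ v_j)` by choosing, for each `k`, the
order `v_k ⊗ w_k` if `ε k = true` and `w_k ⊗ v_k` if `ε k = false`. -/
def altTuple {V : Type*} {j : ℕ} (v w : Fin j → V) (ε : Fin j → Bool) :
    Fin (2 * j) → V := fun m =>
  let k : Fin j := ⟨m.val / 2, by have := m.isLt; omega⟩
  if m.val % 2 = 0 then (if ε k then v k else w k) else (if ε k then w k else v k)

/-!
Swapping the first two arguments of `∇^{N+2}` changes it by the curvature `K(X,Y)` of `∇`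
applied after `∇^N`, minus `∇^N` with the curvature of `∇̂` acting as a derivation on its `N`
arguments (Ricci identity). Hence `∇^{2j+2}` along `(v₀∧w₀) ⊗ T` is
`K(v₀,w₀) ∘ ∇^{2j}_T − ∇^{2j}_{R(v₀,w₀)·T}`, and `R(v₀,w₀)·T` is again a sum of tensors of the
shape `(v₁∧w₁) ⊗ ⋯ ⊗ (v_j∧w_j)`. When `∇̂` is torsion-free, `K(v₀,w₀)` is `C^∞(M)`-linear, so
induction on `j` gives the claim.
-/

open Function Finset

namespace Conn

variable {E : Type*} [AddCommGroup E] [Module R E] {D : VFAct R V}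

def dHom_s8 (c : Conn R V E D) (X : V) : E →+ E :=
  AddMonoidHom.mk' (c.d X) (c.d_add_right X)

theorem d_sub_right (c : Conn R V E D) (X : V) (α β : E) :
    c.d X (α - β) = c.d X α - c.d X β :=
  (c.dHom_s8 X).map_sub α β

theorem d_sum_right (c : Conn R V E D) (X : V) {ι : Type*} (s : Finset ι) (g : ι → E) :
    c.d X (∑ i ∈ s, g i) = ∑ i ∈ s, c.d X (g i) :=
  map_sum (c.dHom_s8 X) g s

theorem d_sub_left (c : Conn R V E D) (X Y : V) (α : E) :
    c.d (X - Y) α = c.d X α - c.d Y α :=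
  (AddMonoidHom.mk' (c.d · α) (c.d_add_left · · α)).map_sub X Y

/-- Uses `∇̂_X Y − ∇̂_Y X` in place of `[X, Y]`: for torsion-free `∇̂` this is the curvature
of `c`. -/
def curvature (c : Conn R V E D) (cT : Conn R V V D) (X Y : V) : E →+ E :=
  (c.dHom_s8 X).comp (c.dHom_s8 Y) - (c.dHom_s8 Y).comp (c.dHom_s8 X) - c.dHom_s8 (cT.d X Y - cT.d Y X)

theorem curvature_apply (c : Conn R V E D) (cT : Conn R V V D) (X Y : V) (β : E) :
    c.curvature cT X Y β = c.d X (c.d Y β) - c.d Y (c.d X β) - c.d (cT.d X Y - cT.d Y X) β :=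
  rfl

theorem curvature_smul (c : Conn R V E D) {cT : Conn R V V D} (htf : TorsionFree cT)
    (X Y : V) (f : R) (β : E) :
    c.curvature cT X Y (f • β) = f • c.curvature cT X Y β := by
  simp only [curvature_apply, c.d_smul_right, c.d_add_right, htf X Y f, sub_smul, smul_sub]
  abel

end Conn

section HigherCovariantDerivative

variable {E : Type*} [AddCommGroup E] [Module R E] {D : VFAct R V}
  (cT : Conn R V V D) (cE : Conn R V E D)

theorem hcd_cons (N : ℕ) (X : V) (Y : Fin N → V) (α : E) :
    hcd cT cE (N + 1) (Fin.cons X Y) α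
      = cE.d X (hcd cT cE N Y α) - ∑ k, hcd cT cE N (update Y k (cT.d X (Y k))) α := by
  simp only [hcd, Fin.cons_zero, Fin.cons_succ]

theorem hcd_update_add (N : ℕ) (Y : Fin N → V) (k : Fin N) (a b : V) (α : E) :
    hcd cT cE N (update Y k (a + b)) α
      = hcd cT cE N (update Y k a) α + hcd cT cE N (update Y k b) α := by
  induction N generalizing a b with
  | zero => exact k.elim0
  | succ N ih =>
    induction Y using Fin.consCases with | cons X Y => ?_
    cases k using Fin.cases with
    | zero =>
      simp only [Fin.update_cons_zero, hcd_cons, cE.d_add_left, cT.d_add_left, ih,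
        sum_add_distrib]
      abel
    | succ i =>
      have hterm : ∀ k, hcd cT cE N (update (update Y i (a + b)) k
            (cT.d X (update Y i (a + b) k))) α
          = hcd cT cE N (update (update Y i a) k (cT.d X (update Y i a k))) α
            + hcd cT cE N (update (update Y i b) k (cT.d X (update Y i b k))) α := by
        intro k
        by_cases hk : k = i
        · subst hk
          simp only [update_self, update_idem, cT.d_add_right, ih]
        · simp only [update_of_ne hk, update_comm (Ne.symm hk) _ (cT.d X (Y k)) Y, ih]
      simp only [← Fin.cons_update, hcd_cons, ih, cE.d_add_right, hterm, sum_add_distrib]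
      abel

theorem hcd_update_sub (N : ℕ) (Y : Fin N → V) (k : Fin N) (a b : V) (α : E) :
    hcd cT cE N (update Y k (a - b)) α
      = hcd cT cE N (update Y k a) α - hcd cT cE N (update Y k b) α :=
  (AddMonoidHom.mk' (fun a => hcd cT cE N (update Y k a) α)
    (hcd_update_add cT cE N Y k · · α)).map_sub a b

end HigherCovariantDerivative

section RicciIdentity

variable {E : Type*} [AddCommGroup E] [Module R E] {D : VFAct R V}
  (cT : Conn R V V D) (cE : Conn R V E D)

theorem hcd_cons_cons (N : ℕ) (A B : V) (Y : Fin N → V) (α : E) :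
    hcd cT cE (N + 2) (Fin.cons A (Fin.cons B Y)) α =
      cE.d A (cE.d B (hcd cT cE N Y α))
      - (∑ m, cE.d A (hcd cT cE N (update Y m (cT.d B (Y m))) α))
      - cE.d (cT.d A B) (hcd cT cE N Y α)
      + (∑ m, hcd cT cE N (update Y m (cT.d (cT.d A B) (Y m))) α)
      - (∑ m, cE.d B (hcd cT cE N (update Y m (cT.d A (Y m))) α))
      + ∑ m, ∑ p, hcd cT cE N (update (update Y m (cT.d A (Y m))) p
          (cT.d B (update Y m (cT.d A (Y m)) p))) α := by
  simp only [hcd_cons, Fin.cons_zero, Fin.cons_succ, Fin.update_cons_zero, ← Fin.cons_update,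
    Fin.sum_univ_succ, Conn.d_sub_right, Conn.d_sum_right, sum_sub_distrib]
  abel

/-- The second-order terms of `∇²_{A,B}` that differentiate two different slots cancel
against those of `∇²_{B,A}`; only the diagonal `p = m` survives. -/
theorem hcd_update_update_sub_swap (N : ℕ) (A B : V) (Y : Fin N → V) (α : E) (m p : Fin N) :
    hcd cT cE N (update (update Y m (cT.d A (Y m))) p (cT.d B (update Y m (cT.d A (Y m)) p))) α
      - hcd cT cE N (update (update Y p (cT.d B (Y p))) m
          (cT.d A (update Y p (cT.d B (Y p)) m))) α
      = if p = m then
          hcd cT cE N (update Y m (cT.d B (cT.d A (Y m)))) α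
            - hcd cT cE N (update Y m (cT.d A (cT.d B (Y m)))) α
        else 0 := by
  by_cases h : p = m
  · subst h
    simp only [update_self, update_idem, if_true]
  · rw [if_neg h, update_of_ne h, update_of_ne (Ne.symm h), update_comm (Ne.symm h), sub_self]

theorem hcd_cons_cons_sub_swap (N : ℕ) (X Y : V) (Z : Fin N → V) (α : E) :
    hcd cT cE (N + 2) (Fin.cons X (Fin.cons Y Z)) α
      - hcd cT cE (N + 2) (Fin.cons Y (Fin.cons X Z)) α
    = cE.curvature cT X Y (hcd cT cE N Z α)
      - ∑ m, hcd cT cE N (update Z m (cT.curvature cT X Y (Z m))) α := by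
  have hdiag : (∑ m, ∑ p, hcd cT cE N (update (update Z m (cT.d X (Z m))) p
        (cT.d Y (update Z m (cT.d X (Z m)) p))) α)
      - (∑ m, ∑ p, hcd cT cE N (update (update Z m (cT.d Y (Z m))) p
        (cT.d X (update Z m (cT.d Y (Z m)) p))) α)
      = ∑ m, (hcd cT cE N (update Z m (cT.d Y (cT.d X (Z m)))) α
          - hcd cT cE N (update Z m (cT.d X (cT.d Y (Z m)))) α) := by
    conv_lhs => arg 2; rw [sum_comm]
    simp only [← sum_sub_distrib, hcd_update_update_sub_swap, sum_ite_eq', mem_univ, if_true]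
  have hslot : ∀ m, hcd cT cE N (update Z m (cT.curvature cT X Y (Z m))) α
      = hcd cT cE N (update Z m (cT.d X (cT.d Y (Z m)))) α
        - hcd cT cE N (update Z m (cT.d Y (cT.d X (Z m)))) α
        - (hcd cT cE N (update Z m (cT.d (cT.d X Y) (Z m))) α
          - hcd cT cE N (update Z m (cT.d (cT.d Y X) (Z m))) α) := by
    intro m
    rw [Conn.curvature_apply, hcd_update_sub, hcd_update_sub, Conn.d_sub_left, hcd_update_sub]
  rw [hcd_cons_cons, hcd_cons_cons, Conn.curvature_apply, Conn.d_sub_left,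
    (sub_eq_iff_eq_add.mp hdiag)]
  simp only [hslot, sum_sub_distrib]
  abel

end RicciIdentity

section AltTuple

def finPairEquiv (j : ℕ) : Fin j × Bool ≃ Fin (2 * j) where
  toFun p := ⟨2 * p.1 + p.2.toNat, by have := p.1.isLt; cases p.2 <;> simp; omega⟩
  invFun q := (⟨q.1 / 2, by omega⟩, q.1 % 2 = 1)
  left_inv := by rintro ⟨m, b⟩; cases b <;> simp [Fin.ext_iff]; omega
  right_inv q := by ext; by_cases h : q.1 % 2 = 1 <;> simp [h] <;> omega

variable {T : Type*} {j : ℕ} (v w : Fin j → T) (ε : Fin j → Bool)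

theorem altTuple_finPairEquiv (m : Fin j) (b : Bool) :
    altTuple v w ε (finPairEquiv j (m, b)) = if ε m = b then w m else v m := by
  have hdiv : (2 * m.1 + 1) / 2 = m.1 := by omega
  cases b <;> cases h : ε m <;> simp [altTuple, finPairEquiv, hdiv, h]

theorem altTuple_update_left (m : Fin j) (c : T) :
    altTuple (update v m c) w ε = update (altTuple v w ε) (finPairEquiv j (m, !ε m)) c := by
  funext q
  obtain ⟨⟨n, b⟩, rfl⟩ := (finPairEquiv j).surjective q
  by_cases hn : n = m
  · subst hn
    cases b <;> cases h : ε n <;> simp [altTuple_finPairEquiv, h]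
  · simp [altTuple_finPairEquiv, hn]

theorem altTuple_update_right (m : Fin j) (c : T) :
    altTuple v (update w m c) ε = update (altTuple v w ε) (finPairEquiv j (m, ε m)) c := by
  funext q
  obtain ⟨⟨n, b⟩, rfl⟩ := (finPairEquiv j).surjective q
  by_cases hn : n = m
  · subst hn
    cases b <;> cases h : ε n <;> simp [altTuple_finPairEquiv, h]
  · simp [altTuple_finPairEquiv, hn]

theorem sum_update_altTuple {M : Type*} [AddCommMonoid M] (q : T → T)
    (g : (Fin (2 * j) → T) → M) :
    ∑ k, g (update (altTuple v w ε) k (q (altTuple v w ε k)))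
      = ∑ m, (g (altTuple (update v m (q (v m))) w ε)
          + g (altTuple v (update w m (q (w m))) ε)) := by
  rw [← (finPairEquiv j).sum_comp, Fintype.sum_prod_type]
  refine sum_congr rfl fun m _ => ?_
  rw [altTuple_update_left, altTuple_update_right]
  cases h : ε m <;> simp [altTuple_finPairEquiv, h, add_comm]

end AltTuple

theorem altTuple_cons {T : Type*} {j : ℕ} (v w : Fin (j + 1) → T) (b : Bool)
    (ε : Fin j → Bool) :
    altTuple v w (Fin.cons b ε)
      = Fin.cons (if b then v 0 else w 0)
          (Fin.cons (if b then w 0 else v 0) (altTuple (Fin.tail v) (Fin.tail w) ε)) := by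
  funext ⟨q, hq⟩
  rcases q with _ | _ | q
  · simp [altTuple]
  · simp [altTuple]
  · have hsucc : (⟨q + 2, hq⟩ : Fin (2 * j + 2)) = (⟨q, by omega⟩ : Fin (2 * j)).succ.succ := rfl
    have hdiv : (⟨(q + 2) / 2, by omega⟩ : Fin (j + 1)) = (⟨q / 2, by omega⟩ : Fin j).succ :=
      Fin.ext (by simp)
    have hmod : (q + 2) % 2 = q % 2 := by omega
    rw [hsucc, Fin.cons_succ, Fin.cons_succ]
    simp only [altTuple, Fin.val_succ, hdiv, hmod, Fin.cons_succ, Fin.tail]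

def altSign {j : ℕ} (ε : Fin j → Bool) : ℤ :=
  (-1) ^ (univ.filter fun k => ε k = false).card

theorem altSign_cons {j : ℕ} (b : Bool) (ε : Fin j → Bool) :
    altSign (Fin.cons b ε : Fin (j + 1) → Bool) = (if b then 1 else -1) * altSign ε := by
  simp only [altSign, card_filter, Fin.sum_univ_succ, Fin.cons_zero, Fin.cons_succ]
  cases b <;> simp [pow_add]

theorem sum_pi_fin_succ_bool {M : Type*} [AddCommMonoid M] {j : ℕ}
    (F : (Fin (j + 1) → Bool) → M) :
    ∑ ε, F ε = ∑ ε : Fin j → Bool, (F (Fin.cons true ε) + F (Fin.cons false ε)) := by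
  rw [← (Fin.consEquiv fun _ => Bool).sum_comp, Fintype.sum_prod_type, Fintype.sum_bool,
    ← sum_add_distrib]
  rfl

section Wedge

variable {E : Type*} [AddCommGroup E] [Module R E] {D : VFAct R V}
  (cT : Conn R V V D) (cE : Conn R V E D)

/-- `∇^{2j}_{(v₁⊗w₁ − w₁⊗v₁)⊗⋯⊗(v_j⊗w_j − w_j⊗v_j)}`, expanded by linearity. -/
def hcdWedge (j : ℕ) (v w : Fin j → V) (α : E) : E :=
  ∑ ε : Fin j → Bool, altSign ε • hcd cT cE (2 * j) (altTuple v w ε) α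

theorem hcdWedge_zero (v w : Fin 0 → V) (α : E) : hcdWedge cT cE 0 v w α = α := by
  simp [hcdWedge, altSign, hcd]

theorem hcdWedge_succ (j : ℕ) (v w : Fin (j + 1) → V) (α : E) :
    hcdWedge cT cE (j + 1) v w α
      = cE.curvature cT (v 0) (w 0) (hcdWedge cT cE j (Fin.tail v) (Fin.tail w) α)
        - ∑ m, (hcdWedge cT cE j
              (update (Fin.tail v) m (cT.curvature cT (v 0) (w 0) (Fin.tail v m))) (Fin.tail w) α
            + hcdWedge cT cE j (Fin.tail v)
              (update (Fin.tail w) m (cT.curvature cT (v 0) (w 0) (Fin.tail w m))) α) := by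
  have hpair : ∀ ε : Fin j → Bool,
      altSign (Fin.cons true ε : Fin (j + 1) → Bool) •
          hcd cT cE (2 * (j + 1)) (altTuple v w (Fin.cons true ε)) α
        + altSign (Fin.cons false ε : Fin (j + 1) → Bool) •
          hcd cT cE (2 * (j + 1)) (altTuple v w (Fin.cons false ε)) α
      = altSign ε • (cE.curvature cT (v 0) (w 0)
            (hcd cT cE (2 * j) (altTuple (Fin.tail v) (Fin.tail w) ε) α)
          - ∑ m, (hcd cT cE (2 * j) (altTuple
                (update (Fin.tail v) m (cT.curvature cT (v 0) (w 0) (Fin.tail v m)))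
                (Fin.tail w) ε) α
            + hcd cT cE (2 * j) (altTuple (Fin.tail v)
                (update (Fin.tail w) m (cT.curvature cT (v 0) (w 0) (Fin.tail w m))) ε) α)) := by
    intro ε
    have hslots := sum_update_altTuple (Fin.tail v) (Fin.tail w) ε
      (cT.curvature cT (v 0) (w 0)) (fun Y => hcd cT cE (2 * j) Y α)
    rw [altSign_cons, altSign_cons, altTuple_cons, altTuple_cons, ← hslots,
      ← hcd_cons_cons_sub_swap]
    simp only [if_true, Bool.false_eq_true, if_false, one_mul, neg_one_mul, neg_smul, smul_sub]
    abel
  simp only [hcdWedge, sum_pi_fin_succ_bool, hpair, smul_sub, smul_add, smul_sum, map_sum,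
    map_zsmul, sum_sub_distrib, sum_add_distrib]
  rw [sum_comm (s := univ (α := Fin j → Bool)), sum_comm (s := univ (α := Fin j → Bool))]

end Wedge

theorem hcdWedge_smul {E : Type*} [AddCommGroup E] [Module R E] {D : VFAct R V}
    (cT : Conn R V V D) (cE : Conn R V E D) (htf : TorsionFree cT)
    (j : ℕ) (v w : Fin j → V) (f : R) (α : E) :
    hcdWedge cT cE j v w (f • α) = f • hcdWedge cT cE j v w α := by
  induction j with
  | zero => rw [hcdWedge_zero, hcdWedge_zero]
  | succ j ih =>
    simp only [hcdWedge_succ, ih, cE.curvature_smul htf, smul_sub, smul_sum, smul_add]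

open scoped Classical in
/-- Tensoriality of even-order antisymmetrized higher covariant
derivatives.  If `∇̂` is torsion-free then for every `j ≥ 1` and all vector fields
`v₁,w₁,…,v_j,w_j`, the operator
`∇^{2j}_{(v₁⊗w₁ − w₁⊗v₁) ⊗ ⋯ ⊗ (v_j⊗w_j − w_j⊗v_j)}` on `C^∞(E)` — expanded by
linearity as the signed sum over all `2^j` choices of orders — is `C^∞(M)`-linear:
it sends `f • α` to `f •` (its value on `α`). -/
theorem statement8
    {R : Type*} [CommRing R] [Algebra ℝ R]
    {V : Type*} [AddCommGroup V] [Module R V]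
    {E : Type*} [AddCommGroup E] [Module R E]
    {D : VFAct R V} (cT : Conn R V V D) (cE : Conn R V E D)
    (htf : TorsionFree cT) :
    ∀ (j : ℕ), 1 ≤ j → ∀ (v w : Fin j → V) (f : R) (α : E),
      (∑ ε : Fin j → Bool,
          ((-1 : ℤ) ^ (Finset.univ.filter (fun k => ε k = false)).card) •
            hcd cT cE (2 * j) (altTuple v w ε) (f • α)) =
        f • ∑ ε : Fin j → Bool,
          ((-1 : ℤ) ^ (Finset.univ.filter (fun k => ε k = false)).card) •
            hcd cT cE (2 * j) (altTuple v w ε) α := by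
  exact fun j _ => hcdWedge_smul cT cE htf j
end
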